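/- Define μ₂(x,y) = BCH(x, (1/2)·BCH(-x,y)). Then for any z, μ₂(BCH(x,z), BCH(y,z)) = BCH(μ₂(x,y), z), i.e. μ₂ is equivariant under right BCH-translation. -/

import Mathlib

/-- Noncommutative formal power series in `n` variables over `ℚ`:
the completed free associative algebra, given by coefficient functions on words. -/
abbrev NC (n : ℕ) := List (Fin n) → ℚ

namespace NC
variable {n : ℕ}

/-- Pointwise addition. -/
def add (f g : NC n) : NC n := fun w => f w + g w

/-- Pointwise negation. -/
def neg (f : NC n) : NC n := fun w => - f w

/-- Pointwise subtraction. -/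
def sub (f g : NC n) : NC n := fun w => f w - g w

/-- Scalar multiplication. -/
def smul (q : ℚ) (f : NC n) : NC n := fun w => q * f w

/-- The zero series. -/
def zero : NC n := fun _ => 0

/-- The unit series. -/
def one : NC n := fun w => if w = [] then 1 else 0

/-- The `i`-th generator (noncommuting indeterminate). -/
def X (i : Fin n) : NC n := fun w => if w = [i] then 1 else 0

/-- The Cauchy (concatenation) product of noncommutative series. -/
def mul (f g : NC n) : NC n :=
  fun w => ∑ k ∈ Finset.range (w.length + 1), f (w.take k) * g (w.drop k)

/-- Powers. -/
def pow (f : NC n) : ℕ → NC n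
  | 0 => one
  | k + 1 => mul f (pow f k)

/-- The Lie bracket `[f,g] = fg - gf`. -/
def br (f g : NC n) : NC n := sub (mul f g) (mul g f)

/-- The formal exponential; for a series with zero constant term all but finitely
many terms contribute to each coefficient, so this truncated sum is exact. -/
def exp (f : NC n) : NC n :=
  fun w => ∑ k ∈ Finset.range (w.length + 1), (k.factorial : ℚ)⁻¹ * pow f k w

/-- The formal logarithm; exact on series with constant term `1`. -/
def log (g : NC n) : NC n :=
  fun w => ∑ k ∈ Finset.range (w.length + 1),
    (-1 : ℚ) ^ (k + 1) * (k : ℚ)⁻¹ * pow (sub g one) k w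

/-- The Baker–Campbell–Hausdorff series: the unique formal series with
`exp f * exp g = exp (bch f g)`. -/
def bch (f g : NC n) : NC n := log (mul (exp f) (exp g))

/-- `μ₂(x,y) = BCH(x, ½·BCH(-x,y))`. -/
def mu2 (f g : NC n) : NC n := bch f (smul (1/2) (bch (neg f) g))

/-- Iterated (multi-argument) BCH: `BCH(x₁,…,xₙ) = BCH(x₁, BCH(x₂,…,xₙ))`. -/
def bchList : List (NC n) → NC n
  | [] => zero
  | f :: l => bch f (bchList l)

/-- Truncation: projection onto the span of words of length `≤ d`
(Lie monomials with at most `d - 1` brackets). -/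
def trunc (d : ℕ) (f : NC n) : NC n :=
  fun w => if w.length ≤ d then f w else 0

/-- `exp(ad_f)` applied to `g`, i.e. `Σ_k ad_f^k(g)/k!`; for `f` with zero constant
term all but finitely many terms contribute to each coefficient. -/
def expAd (f g : NC n) : NC n :=
  fun w => ∑ k ∈ Finset.range (w.length + 1),
    (k.factorial : ℚ)⁻¹ * ((fun z => br f z)^[k] g) w

end NC

/-!
Conjugation `v ↦ e^{-z} v e^{z}` is multiplicative and commutes with `exp` and `log`. Since
`e^{-BCH(x,z)} e^{BCH(y,z)} = e^{-z} (e^{-x} e^{y}) e^{z}`, the inner `BCH(-x,y)` of `μ₂` gets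
conjugated, the factor `½` passes through the conjugation, and the outer BCH absorbs it:
`BCH(BCH(x,z), e^{-z} v e^{z}) = BCH(BCH(x,v), z)`.

The identities between `exp` and `log` of noncommutative series come from evaluating one-variable
power series at a series without constant term, which is multiplicative and compatible with
substitution; they reduce to `log ∘ (exp - 1) = X` and `exp ∘ log = 1 + X`, proved by
differentiation.
-/

namespace PowerSeries

theorem coeff_pow_eq_zero_of_lt {R : Type*} [CommSemiring R] {p : R⟦X⟧}
    (hp : constantCoeff p = 0) {k m : ℕ} (h : m < k) : coeff m (p ^ k) = 0 :=
  X_pow_dvd_iff.1 (pow_dvd_pow_of_dvd (X_dvd_iff.2 hp) k) m h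

theorem coeff_subst_eq_sum {R : Type*} [CommRing R] {p : R⟦X⟧} (hp : constantCoeff p = 0)
    (q : R⟦X⟧) {m N : ℕ} (hm : m < N) :
    coeff m (q.subst p) = ∑ k ∈ Finset.range N, coeff k q * coeff m (p ^ k) := by
  rw [coeff_subst' (HasSubst.of_constantCoeff_zero' hp)]
  simp only [smul_eq_mul]
  refine finsum_eq_sum_of_support_subset _ fun k hk => ?_
  simp only [Finset.coe_range, Set.mem_Iio]
  by_contra! h
  exact hk (by simp only [coeff_pow_eq_zero_of_lt hp (show m < k by omega), mul_zero])

theorem derivative_log_mul_one_add_X : d⁄dX ℚ (log ℚ) * (1 + X) = 1 := by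
  have := congrArg (rescale (-1 : ℚ)) (mk_one_mul_one_sub_eq_one (S := ℚ))
  simpa [deriv_log, rescale_mk, map_sub, rescale_neg_one_X, sub_eq_add_neg] using this

theorem log_subst_exp_sub_one : (log ℚ).subst (exp ℚ - 1) = X := by
  have hs := HasSubst.exp_sub_one (A := ℚ)
  refine derivative.ext ?_ ?_
  · have hexp : substAlgHom hs (1 + X : ℚ⟦X⟧) = exp ℚ := by
      rw [map_add, map_one, substAlgHom_X, add_sub_cancel]
    rw [derivative_subst hs, derivative_X, map_sub, derivative_exp, derivative_one, sub_zero,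
      ← coe_substAlgHom hs]
    conv_lhs => arg 2; rw [← hexp]
    rw [← map_mul, derivative_log_mul_one_add_X, map_one]
  · rw [constantCoeff_X]
    refine constantCoeff_subst_eq_zero (S := ℚ) (τ := Unit) ?_ _ constantCoeff_log
    rw [map_sub, map_one, ← constantCoeff_eq, constantCoeff_exp, sub_self]

theorem exp_subst_log : (exp ℚ).subst (log ℚ) = 1 + X := by
  have hs := HasSubst.log (A := ℚ)
  set E := (exp ℚ).subst (log ℚ)
  set D := d⁄dX ℚ (log ℚ)
  have hD : D * (1 + X) = 1 := derivative_log_mul_one_add_X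
  have hE : d⁄dX ℚ E = E * D := by
    rw [derivative_subst hs, derivative_exp]
  have hdD : D * D + d⁄dX ℚ D = 0 := by
    have := congrArg (d⁄dX ℚ) hD
    rw [Derivation.leibniz, map_add, derivative_X, Derivation.map_one_eq_zero, zero_add,
      smul_eq_mul, smul_eq_mul, mul_one] at this
    linear_combination D * this - d⁄dX ℚ D * hD
  -- `E' = E D` and `D' = -D²`, so `E D` is constant.
  have hED : E * D = 1 := by
    refine derivative.ext ?_ ?_
    · rw [Derivation.leibniz, Derivation.map_one_eq_zero, hE, smul_eq_mul, smul_eq_mul]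
      linear_combination E * hdD
    · have h0 : constantCoeff E = 1 := by
        rw [← coeff_zero_eq_constantCoeff_apply,
          coeff_subst_eq_sum constantCoeff_log _ zero_lt_one]
        simp
      have h1 : constantCoeff D = 1 := by
        simpa using congrArg constantCoeff hD
      rw [map_mul, h0, h1, map_one, mul_one]
  linear_combination (1 + X) * hED - E * hD

end PowerSeries

namespace NC

variable {n : ℕ}

local infixl:70 " ⬝ " => mul

protected theorem mul_one (f : NC n) : f ⬝ one = f := by
  funext w
  rw [mul, Finset.sum_eq_single_of_mem w.length (by simp)]
  · simp [one]
  · intro k hk hne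
    have : ¬ w.length ≤ k := by simp only [Finset.mem_range] at hk; omega
    simp [one, this]

protected theorem one_mul (f : NC n) : one ⬝ f = f := by
  funext w
  rw [mul, Finset.sum_eq_single_of_mem 0 (by simp)]
  · simp [one]
  · intro k hk hne
    have : w.take k ≠ [] := by
      simp only [Finset.mem_range] at hk
      rw [ne_eq, List.take_eq_nil_iff, ← List.length_eq_zero_iff]
      omega
    simp [one, this]

protected theorem mul_assoc (f g h : NC n) : f ⬝ g ⬝ h = f ⬝ (g ⬝ h) := by
  funext w
  have key := Finset.sum_range_diag_flip (w.length + 1) fun j i =>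
    f (w.take j) * g ((w.drop j).take i) * h (w.drop (j + i))
  simp only [mul, Finset.sum_mul, Finset.mul_sum, List.length_drop, ← mul_assoc, List.drop_drop]
  refine (Finset.sum_congr rfl fun k hk => ?_).trans
    (key.trans (Finset.sum_congr rfl fun j hj => ?_))
  · simp only [Finset.mem_range] at hk
    rw [List.length_take, min_eq_left (by omega)]
    refine Finset.sum_congr rfl fun i hi => ?_
    simp only [Finset.mem_range] at hi
    rw [List.take_take, min_eq_left (by omega), List.drop_take, Nat.add_sub_cancel' (by omega)]
  · simp only [Finset.mem_range] at hj
    rw [Nat.sub_add_comm (by omega)]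

protected theorem smul_mul (q : ℚ) (f g : NC n) : smul q f ⬝ g = smul q (f ⬝ g) := by
  funext w
  simp only [mul, smul, Finset.mul_sum, mul_assoc]

protected theorem mul_smul (q : ℚ) (f g : NC n) : f ⬝ smul q g = smul q (f ⬝ g) := by
  funext w
  simp only [mul, smul, Finset.mul_sum, mul_left_comm]

theorem sum_mul {ι : Type*} (s : Finset ι) (f : ι → NC n) (g : NC n) :
    (∑ i ∈ s, f i) ⬝ g = ∑ i ∈ s, f i ⬝ g := by
  funext w
  simp only [mul, Finset.sum_apply, Finset.sum_mul]
  exact Finset.sum_comm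

theorem mul_sum {ι : Type*} (s : Finset ι) (f : NC n) (g : ι → NC n) :
    f ⬝ ∑ i ∈ s, g i = ∑ i ∈ s, f ⬝ g i := by
  funext w
  simp only [mul, Finset.sum_apply, Finset.mul_sum]
  exact Finset.sum_comm

protected theorem pow_add (f : NC n) (a b : ℕ) : pow f (a + b) = pow f a ⬝ pow f b := by
  induction a with
  | zero => rw [Nat.zero_add, pow, NC.one_mul]
  | succ a ih => rw [Nat.add_right_comm, pow, pow, ih, NC.mul_assoc]

protected theorem pow_one (f : NC n) : pow f 1 = f :=
  NC.mul_one f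

theorem pow_smul (q : ℚ) (f : NC n) (k : ℕ) : pow (smul q f) k = smul (q ^ k) (pow f k) := by
  induction k with
  | zero => funext w; simp [pow, smul]
  | succ k ih =>
    rw [pow, ih, NC.smul_mul, NC.mul_smul]
    funext w
    simp only [smul, pow]
    ring

theorem mul_apply_nil (f g : NC n) : (f ⬝ g) [] = f [] * g [] := by
  simp [mul]

theorem pow_apply_eq_zero_of_length_lt {f : NC n} (hf : f [] = 0) {k : ℕ} {w : List (Fin n)}
    (h : w.length < k) : pow f k w = 0 := by
  induction k generalizing w with
  | zero => omega
  | succ k ih =>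
    rw [pow, mul]
    refine Finset.sum_eq_zero fun j hj => ?_
    rcases j with _ | j
    · simp [hf]
    · simp only [Finset.mem_range] at hj
      rw [ih (by simp; omega), mul_zero]

theorem mul_apply_congr {f f' g g' : NC n} {w : List (Fin n)}
    (hf : ∀ v : List (Fin n), v.length ≤ w.length → f v = f' v)
    (hg : ∀ v : List (Fin n), v.length ≤ w.length → g v = g' v) :
    (f ⬝ g) w = (f' ⬝ g') w :=
  Finset.sum_congr rfl fun k _ => by
    rw [hf _ (by simp), hg _ (by simp)]

open PowerSeries in
/-- Substitution of `f` into the one-variable series `p`. Truncating at the word length is exact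
only when `f [] = 0`, as then `pow f k w = 0` for `k > w.length`. -/
noncomputable def eval (p : PowerSeries ℚ) (f : NC n) : NC n :=
  fun w => ∑ k ∈ Finset.range (w.length + 1), coeff k p * pow f k w

section eval

open PowerSeries

variable {p : PowerSeries ℚ} {f : NC n}

theorem eval_apply_eq_sum (hf : f [] = 0) {w : List (Fin n)} {N : ℕ} (hN : w.length < N) :
    eval p f w = ∑ k ∈ Finset.range N, coeff k p * pow f k w :=
  Finset.sum_subset (by simp; omega) fun k _ hk => by
    rw [pow_apply_eq_zero_of_length_lt hf (by simpa using hk), mul_zero]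

theorem eval_apply_eq_sum_apply (hf : f [] = 0) {w : List (Fin n)} {N : ℕ}
    (hN : w.length < N) :
    eval p f w = (∑ k ∈ Finset.range N, smul (coeff k p) (pow f k)) w := by
  rw [eval_apply_eq_sum hf hN, Finset.sum_apply]
  rfl

theorem eval_add (p q : PowerSeries ℚ) (f : NC n) : eval (p + q) f = eval p f + eval q f := by
  funext w
  simp [eval, add_mul, Finset.sum_add_distrib]

theorem eval_sub (p q : PowerSeries ℚ) (f : NC n) : eval (p - q) f = eval p f - eval q f := by
  funext w
  simp [eval, sub_mul, Finset.sum_sub_distrib]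

theorem eval_one (f : NC n) : eval 1 f = one := by
  funext w
  rw [eval, Finset.sum_eq_single_of_mem 0 (by simp)]
  · simp [pow]
  · intro k _ hk
    simp [coeff_one, hk]

theorem eval_X (hf : f [] = 0) : eval PowerSeries.X f = f := by
  funext w
  rw [eval_apply_eq_sum hf (N := w.length + 2) (by omega), Finset.sum_eq_single_of_mem 1]
  · simp [NC.pow_one]
  · simp
  · intro k _ hk
    simp [coeff_X, hk]

theorem eval_mul (hf : f [] = 0) (p q : PowerSeries ℚ) :
    eval p f ⬝ eval q f = eval (p * q) f := by
  funext w
  set N := w.length + 1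
  have hsum : (eval p f ⬝ eval q f) w
      = ∑ k ∈ Finset.range N, ∑ j ∈ Finset.range N,
          coeff k p * coeff j q * pow f (k + j) w := by
    rw [mul_apply_congr (fun v hv => eval_apply_eq_sum_apply hf (Nat.lt_succ_of_le hv))
      (fun v hv => eval_apply_eq_sum_apply hf (Nat.lt_succ_of_le hv)), sum_mul, Finset.sum_apply]
    refine Finset.sum_congr rfl fun k _ => ?_
    rw [mul_sum, Finset.sum_apply]
    refine Finset.sum_congr rfl fun j _ => ?_
    rw [NC.smul_mul, NC.mul_smul, ← NC.pow_add]
    simp only [smul, mul_assoc]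
  have htrunc : ∀ k ∈ Finset.range N,
      ∑ j ∈ Finset.range N, coeff k p * coeff j q * pow f (k + j) w
        = ∑ j ∈ Finset.range (N - k), coeff k p * coeff j q * pow f (k + j) w := by
    intro k hk
    refine (Finset.sum_subset (by simp) fun j _ hj => ?_).symm
    simp only [Finset.mem_range, not_lt] at hj
    rw [pow_apply_eq_zero_of_length_lt hf (by omega), mul_zero]
  rw [hsum, Finset.sum_congr rfl htrunc, ← Finset.sum_range_diag_flip, eval]
  refine Finset.sum_congr rfl fun m hm => ?_
  rw [coeff_mul, Finset.Nat.sum_antidiagonal_eq_sum_range_succ_mk, Finset.sum_mul]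
  refine Finset.sum_congr rfl fun k hk => ?_
  simp only [Finset.mem_range] at hk
  rw [Nat.add_sub_cancel' (by omega)]

theorem eval_pow (hf : f [] = 0) (p : PowerSeries ℚ) (k : ℕ) :
    pow (eval p f) k = eval (p ^ k) f := by
  induction k with
  | zero => rw [_root_.pow_zero, eval_one]; rfl
  | succ k ih => rw [pow, ih, eval_mul hf, _root_.pow_succ']

theorem eval_subst (hf : f [] = 0) (hp : constantCoeff p = 0) (q : PowerSeries ℚ) :
    eval q (eval p f) = eval (q.subst p) f := by
  funext w
  calc eval q (eval p f) w
      = ∑ k ∈ Finset.range (w.length + 1), coeff k q * eval (p ^ k) f w := by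
        simp only [eval, eval_pow hf]
    _ = ∑ m ∈ Finset.range (w.length + 1),
          (∑ k ∈ Finset.range (w.length + 1), coeff k q * coeff m (p ^ k)) * pow f m w := by
        simp only [eval, Finset.mul_sum, Finset.sum_mul, mul_assoc]
        exact Finset.sum_comm
    _ = eval (q.subst p) f w :=
        Finset.sum_congr rfl fun m hm => by
          rw [coeff_subst_eq_sum hp q (Finset.mem_range.1 hm)]

theorem eval_rescale (a : ℚ) (p : PowerSeries ℚ) (f : NC n) :
    eval (rescale a p) f = eval p (smul a f) := by
  funext w
  simp only [eval, coeff_rescale, pow_smul, smul]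
  exact Finset.sum_congr rfl fun _ _ => by ring

end eval

theorem exp_eq_eval (f : NC n) : exp f = eval (PowerSeries.exp ℚ) f := by
  funext w
  simp [exp, eval, PowerSeries.coeff_exp]

theorem log_eq_eval (g : NC n) : log g = eval (PowerSeries.log ℚ) (sub g one) := by
  funext w
  refine Finset.sum_congr rfl fun k _ => ?_
  rcases k with _ | k <;> simp [div_eq_mul_inv]

theorem exp_apply_nil (f : NC n) : exp f [] = 1 := by
  simp [exp, pow, one]

theorem log_apply_nil (g : NC n) : log g [] = 0 := by
  simp [log]

theorem bch_apply_nil (f g : NC n) : bch f g [] = 0 :=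
  log_apply_nil _

theorem log_exp {f : NC n} (hf : f [] = 0) : log (exp f) = f := by
  have hsub : sub (exp f) one = eval (PowerSeries.exp ℚ - 1) f := by
    rw [eval_sub, eval_one, ← exp_eq_eval]
    rfl
  have hconst : PowerSeries.constantCoeff (PowerSeries.exp ℚ - 1) = 0 := by simp
  rw [log_eq_eval, hsub, eval_subst hf hconst, PowerSeries.log_subst_exp_sub_one, eval_X hf]

theorem exp_log {g : NC n} (hg : g [] = 1) : exp (log g) = g := by
  have hsub : sub g one [] = 0 := by simp [sub, one, hg]
  rw [log_eq_eval, exp_eq_eval, eval_subst hsub PowerSeries.constantCoeff_log,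
    PowerSeries.exp_subst_log, eval_add, eval_one, eval_X hsub]
  funext w
  simp [sub]

theorem exp_bch {f g : NC n} : exp (bch f g) = exp f ⬝ exp g :=
  exp_log (by rw [mul_apply_nil, exp_apply_nil, exp_apply_nil, one_mul])

theorem exp_neg_eq_eval (f : NC n) :
    exp (neg f) = eval (PowerSeries.evalNegHom (PowerSeries.exp ℚ)) f := by
  have hneg : neg f = smul (-1) f := by
    funext w
    simp [neg, smul]
  rw [hneg, exp_eq_eval, PowerSeries.evalNegHom, eval_rescale]

theorem exp_mul_exp_neg {f : NC n} (hf : f [] = 0) : exp f ⬝ exp (neg f) = one := by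
  rw [exp_neg_eq_eval, exp_eq_eval, eval_mul hf, PowerSeries.exp_mul_exp_neg_eq_one, eval_one]

theorem exp_neg_mul_exp {f : NC n} (hf : f [] = 0) : exp (neg f) ⬝ exp f = one := by
  rw [exp_neg_eq_eval, exp_eq_eval, eval_mul hf, mul_comm, PowerSeries.exp_mul_exp_neg_eq_one,
    eval_one]

def conj (a b v : NC n) : NC n := a ⬝ v ⬝ b

section conj

variable {a b : NC n}

theorem conj_mul (hba : b ⬝ a = one) (u v : NC n) :
    conj a b u ⬝ conj a b v = conj a b (u ⬝ v) := by
  simp only [conj, NC.mul_assoc]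
  rw [← NC.mul_assoc b a, hba, NC.one_mul]

theorem conj_one (hab : a ⬝ b = one) : conj a b one = one := by
  rw [conj, NC.mul_one, hab]

theorem conj_pow (hab : a ⬝ b = one) (hba : b ⬝ a = one) (v : NC n) (k : ℕ) :
    conj a b (pow v k) = pow (conj a b v) k := by
  induction k with
  | zero => exact conj_one hab
  | succ k ih => rw [pow, pow, ← ih, conj_mul hba]

theorem conj_smul (q : ℚ) (v : NC n) : conj a b (smul q v) = smul q (conj a b v) := by
  rw [conj, conj, NC.mul_smul, NC.smul_mul]

theorem conj_sum {ι : Type*} (s : Finset ι) (v : ι → NC n) :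
    conj a b (∑ i ∈ s, v i) = ∑ i ∈ s, conj a b (v i) := by
  rw [conj, mul_sum, sum_mul]
  rfl

theorem conj_apply_nil (v : NC n) : conj a b v [] = a [] * v [] * b [] := by
  rw [conj, mul_apply_nil, mul_apply_nil]

theorem conj_apply_congr {u u' : NC n} {w : List (Fin n)}
    (h : ∀ v : List (Fin n), v.length ≤ w.length → u v = u' v) :
    conj a b u w = conj a b u' w :=
  mul_apply_congr (fun _ hv => mul_apply_congr (fun _ _ => rfl) fun x hx => h x (hx.trans hv))
    fun _ _ => rfl

theorem conj_eval (hab : a ⬝ b = one) (hba : b ⬝ a = one) {v : NC n} (hv : v [] = 0)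
    (p : PowerSeries ℚ) : conj a b (eval p v) = eval p (conj a b v) := by
  funext w
  have hN := Nat.lt_succ_self w.length
  have hcv : conj a b v [] = 0 := by rw [conj_apply_nil, hv, mul_zero, zero_mul]
  rw [conj_apply_congr fun u hu => eval_apply_eq_sum_apply hv (Nat.lt_succ_of_le hu),
    eval_apply_eq_sum_apply hcv hN, conj_sum]
  simp only [conj_smul, conj_pow hab hba]

theorem conj_exp (hab : a ⬝ b = one) (hba : b ⬝ a = one) {v : NC n} (hv : v [] = 0) :
    conj a b (exp v) = exp (conj a b v) := by
  rw [exp_eq_eval, exp_eq_eval, conj_eval hab hba hv]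

end conj

protected theorem left_inv_eq_right_inv {a u b : NC n} (hau : a ⬝ u = one)
    (hub : u ⬝ b = one) : a = b := by
  rw [← NC.mul_one a, ← hub, ← NC.mul_assoc, hau, NC.one_mul]

variable {x y z : NC n}

theorem exp_neg_bch (hx : x [] = 0) (hz : z [] = 0) :
    exp (neg (bch x z)) = exp (neg z) ⬝ exp (neg x) := by
  refine NC.left_inv_eq_right_inv (exp_neg_mul_exp (bch_apply_nil x z)) ?_
  rw [exp_bch, NC.mul_assoc, ← NC.mul_assoc (exp z), exp_mul_exp_neg hz, NC.one_mul,
    exp_mul_exp_neg hx]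

theorem bch_neg_bch_bch (hx : x [] = 0) (hz : z [] = 0) :
    bch (neg (bch x z)) (bch y z) = conj (exp (neg z)) (exp z) (bch (neg x) y) := by
  have hexp : exp (neg (bch x z)) ⬝ exp (bch y z)
      = conj (exp (neg z)) (exp z) (exp (bch (neg x) y)) := by
    simp only [exp_neg_bch hx hz, exp_bch, conj, NC.mul_assoc]
  rw [bch, hexp, conj_exp (exp_neg_mul_exp hz) (exp_mul_exp_neg hz) (bch_apply_nil _ _),
    log_exp (by rw [conj_apply_nil, bch_apply_nil, mul_zero, zero_mul])]

theorem bch_bch_conj (hz : z [] = 0) {v : NC n} (hv : v [] = 0) :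
    bch (bch x z) (conj (exp (neg z)) (exp z) v) = bch (bch x v) z := by
  refine congrArg log ?_
  rw [← conj_exp (exp_neg_mul_exp hz) (exp_mul_exp_neg hz) hv, exp_bch, exp_bch, conj]
  simp only [NC.mul_assoc]
  rw [← NC.mul_assoc (exp z), exp_mul_exp_neg hz, NC.one_mul]

theorem mu2_bch_bch (hx : x [] = 0) (hz : z [] = 0) :
    mu2 (bch x z) (bch y z) = bch (mu2 x y) z := by
  rw [mu2, mu2, bch_neg_bch_bch hx hz, ← conj_smul,
    bch_bch_conj hz (by rw [smul, bch_apply_nil, mul_zero])]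

end NC

/-- right BCH-equivariance of `μ₂`:
`μ₂(BCH(x,z), BCH(y,z)) = BCH(μ₂(x,y), z)`. -/
theorem mu2_right_equivariant :
    NC.mu2 (NC.bch (NC.X (0 : Fin 3)) (NC.X 2)) (NC.bch (NC.X 1) (NC.X 2))
      = NC.bch (NC.mu2 (NC.X 0) (NC.X 1)) (NC.X 2) :=
  NC.mu2_bch_bch (by simp [NC.X]) (by simp [NC.X])
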